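/- For all x > 0 and y ∈ [0,1] such that exp(J(x,y))·y < 1, one has x = f_BCS(exp(J(x,y))·y) · exp(−J(x,y)). -/

import Mathlib

/-!
Substituting `ε = c s` gives the scaling law `J(c x, c y) = J(x, y) - log c` for `c > 0`: the
first term of the integrand is homogeneous of degree `-1` in `(x, y, ε)`, and what the second
term loses is the Frullani integral `∫₀^∞ (tanh (c s / 2) - tanh (s / 2)) / s ds = log c`.
For `c = exp J(x, y)` the point `(c x, c y)` is thus a zero of `J`, so `c x = f_BCS (c y)` by
uniqueness of that zero.
-/

open Real MeasureTheory Set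

noncomputable section

/-- The two-dimensional density of states `N₀(ε)`, extended evenly to `(-4,4)`
and by `0` outside. -/
def N0 (ε : ℝ) : ℝ :=
  if |ε| < 4 then
    (Real.pi ^ 2)⁻¹ * ∫ u in (-2:ℝ)..(2 - |ε|),
      (Real.sqrt (4 - u ^ 2) * Real.sqrt (4 - (u + |ε|) ^ 2))⁻¹
  else 0

/-- The three-dimensional density of states `N_{t_z}(ε)`. -/
def N3 (tz ε : ℝ) : ℝ :=
  Real.pi⁻¹ * ∫ u in (-2:ℝ)..2, N0 (tz * u + ε) / Real.sqrt (4 - u ^ 2)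

/-- `tanh (x / y)` with the convention that it equals `1` when `y = 0`. -/
def thQ (x y : ℝ) : ℝ := if y = 0 then 1 else Real.tanh (x / y)

/-- The tight-binding band relation of the anisotropic 3D model. -/
def bandE (tz k₁ k₂ k₃ : ℝ) : ℝ :=
  -2 * (Real.cos k₁ + Real.cos k₂) - 2 * tz * Real.cos k₃

/-- The integrand of the Néel-temperature equation, interpreted as `U/(4T)` where the band
relation vanishes. -/
def neelIntegrand (U tz T k₁ k₂ k₃ : ℝ) : ℝ :=
  if bandE tz k₁ k₂ k₃ = 0 then U / (4 * T)
  else U * Real.tanh (bandE tz k₁ k₂ k₃ / (2 * T)) / (2 * bandE tz k₁ k₂ k₃)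

/-- The equation characterizing the Néel temperature of the anisotropic 3D model. -/
def neelEq (U tz T : ℝ) : Prop :=
  1 = (∫ k₁ in (-Real.pi)..Real.pi, ∫ k₂ in (-Real.pi)..Real.pi,
        ∫ k₃ in (-Real.pi)..Real.pi, neelIntegrand U tz T k₁ k₂ k₃) / (2 * Real.pi) ^ 3

/-- The antiferromagnetic mean-field (gap) equation of the anisotropic 3D model. -/
def gapEq (U tz T Δ : ℝ) : Prop :=
  1 = (∫ k₁ in (-Real.pi)..Real.pi, ∫ k₂ in (-Real.pi)..Real.pi,
        ∫ k₃ in (-Real.pi)..Real.pi,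
          U * thQ (Real.sqrt (Δ ^ 2 + bandE tz k₁ k₂ k₃ ^ 2)) (2 * T)
            / (2 * Real.sqrt (Δ ^ 2 + bandE tz k₁ k₂ k₃ ^ 2))) / (2 * Real.pi) ^ 3

/-- The 2D band relation. -/
def bandE2 (k₁ k₂ : ℝ) : ℝ := -2 * (Real.cos k₁ + Real.cos k₂)

/-- The equation characterizing the 2D Néel temperature. -/
def neelEq2 (U T : ℝ) : Prop :=
  1 = (∫ k₁ in (-Real.pi)..Real.pi, ∫ k₂ in (-Real.pi)..Real.pi,
        (if bandE2 k₁ k₂ = 0 then U / (4 * T)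
         else U * Real.tanh (bandE2 k₁ k₂ / (2 * T)) / (2 * bandE2 k₁ k₂))) / (2 * Real.pi) ^ 2

/-- The 2D antiferromagnetic mean-field (gap) equation. -/
def gapEq2 (U T Δ : ℝ) : Prop :=
  1 = (∫ k₁ in (-Real.pi)..Real.pi, ∫ k₂ in (-Real.pi)..Real.pi,
        U * thQ (Real.sqrt (Δ ^ 2 + bandE2 k₁ k₂ ^ 2)) (2 * T)
          / (2 * Real.sqrt (Δ ^ 2 + bandE2 k₁ k₂ ^ 2))) / (2 * Real.pi) ^ 2

/-- The BCS-type function `J(x,y)`. -/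
def Jfun (x y : ℝ) : ℝ :=
  ∫ ε in Set.Ioi (0:ℝ),
    (thQ (Real.sqrt (x ^ 2 + ε ^ 2)) (2 * y) / Real.sqrt (x ^ 2 + ε ^ 2)
      - Real.tanh (ε / 2) / ε)

/-- `f` is the BCS gap-ratio function: for every `y ∈ [0,1)`, `f y` is the unique positive
solution `x` of `J(x,y) = 0`. -/
def IsBCS (f : ℝ → ℝ) : Prop :=
  ∀ y ∈ Set.Ico (0:ℝ) 1,
    0 < f y ∧ Jfun (f y) y = 0 ∧ ∀ x, 0 < x → Jfun x y = 0 → x = f y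

open Filter Topology

namespace Real

theorem tanh_eq_one_sub (t : ℝ) : tanh t = 1 - 2 / (exp (2 * t) + 1) := by
  have h : exp (2 * t) = exp t ^ 2 := by rw [← exp_nat_mul]; ring_nf
  rw [tanh_eq, exp_neg, h]
  field_simp
  ring

theorem tanh_monotone : Monotone tanh := fun a b hab => by
  rw [tanh_eq_one_sub, tanh_eq_one_sub]
  gcongr

theorem tanh_nonneg {t : ℝ} (ht : 0 ≤ t) : 0 ≤ tanh t :=
  tanh_zero ▸ tanh_monotone ht

theorem one_sub_tanh_le (t : ℝ) : 1 - tanh t ≤ 2 * exp (-(2 * t)) := by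
  rw [tanh_eq_one_sub, sub_sub_cancel, exp_neg, ← div_eq_mul_inv]
  gcongr
  linarith

theorem tanh_le_two_mul {t : ℝ} (ht : 0 ≤ t) : tanh t ≤ 2 * t := by
  have h1 : 1 ≤ exp (2 * t) := one_le_exp (by linarith)
  have h2 : exp (-(2 * t)) ≤ 1 - tanh t := by
    rw [tanh_eq_one_sub, sub_sub_cancel, exp_neg, inv_eq_one_div,
      div_le_div_iff₀ (by positivity) (by positivity)]
    linarith
  linarith [add_one_le_exp (-(2 * t))]

theorem continuous_tanh : Continuous tanh := by
  simp_rw [funext tanh_eq_sinh_div_cosh]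
  exact continuous_sinh.div continuous_cosh fun t => (cosh_pos t).ne'

theorem tendsto_tanh_atTop : Tendsto tanh atTop (𝓝 1) := by
  simp_rw [funext tanh_eq_one_sub]
  have : Tendsto (fun t : ℝ => exp (2 * t) + 1) atTop atTop :=
    tendsto_atTop_add_const_right _ 1 (tendsto_exp_atTop.comp (tendsto_id.const_mul_atTop two_pos))
  simpa using tendsto_const_nhds.sub (this.const_div_atTop 2)

end Real

theorem thQ_le_one (a b : ℝ) : thQ a b ≤ 1 := by
  unfold thQ
  split_ifs
  exacts [le_rfl, (tanh_lt_one _).le]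

theorem tanh_div_le_thQ {a b c : ℝ} (ha : 0 ≤ a) (hb : 0 ≤ b) (hbc : b ≤ c) :
    tanh (a / c) ≤ thQ a b := by
  unfold thQ
  split_ifs with hb0
  · exact (tanh_lt_one _).le
  · exact tanh_monotone (div_le_div_of_nonneg_left ha (lt_of_le_of_ne hb (Ne.symm hb0)) hbc)

theorem thQ_mul_mul {c : ℝ} (hc : c ≠ 0) (a b : ℝ) : thQ (c * a) (c * b) = thQ a b := by
  simp only [thQ, mul_eq_zero, hc, false_or, mul_div_mul_left _ _ hc]

theorem continuous_thQ_left (b : ℝ) : Continuous fun a => thQ a b := by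
  unfold thQ
  split_ifs
  exacts [continuous_const, continuous_tanh.comp (continuous_id.div_const b)]

def bcsIntegrand (x y ε : ℝ) : ℝ :=
  thQ (√(x ^ 2 + ε ^ 2)) (2 * y) / √(x ^ 2 + ε ^ 2) - tanh (ε / 2) / ε

theorem measurable_bcsIntegrand (x y : ℝ) : Measurable (bcsIntegrand x y) := by
  unfold bcsIntegrand
  have := (continuous_thQ_left (2 * y)).measurable
  have := continuous_tanh.measurable
  fun_prop

theorem abs_bcsIntegrand_le {x y s : ℝ} (hx : 0 < x) (hy0 : 0 ≤ y) (hy1 : y ≤ 1) (hs : 0 < s) :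
    |bcsIntegrand x y s| ≤ 2 / x * exp (-s) + (1 + x ^ 2) * (1 + s ^ 2)⁻¹ := by
  set R := √(x ^ 2 + s ^ 2)
  set t := tanh (s / 2)
  have hR2 : R ^ 2 = x ^ 2 + s ^ 2 := sq_sqrt (by positivity)
  have hxR : x ≤ R := le_sqrt_of_sq_le (by nlinarith)
  have hsR : s ≤ R := le_sqrt_of_sq_le (by nlinarith)
  have hR : 0 < R := hx.trans_le hxR
  have ht0 : 0 ≤ t := tanh_nonneg (by positivity)
  have hts : t ≤ s := by linarith [tanh_le_two_mul (t := s / 2) (by positivity)]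
  have htT : t ≤ thQ R (2 * y) :=
    (tanh_monotone (by linarith)).trans (tanh_div_le_thQ (c := 2) hR.le (by positivity) (by linarith))
  have hT1 : 1 - t ≤ 2 * exp (-s) := by
    simpa [t, mul_div_cancel₀] using one_sub_tanh_le (s / 2)
  have hsplit : bcsIntegrand x y s = (thQ R (2 * y) - t) / R - t * (1 / s - 1 / R) := by
    simp only [bcsIntegrand, R, t]
    field_simp
    ring
  have hA0 : 0 ≤ (thQ R (2 * y) - t) / R := div_nonneg (by linarith) hR.le
  have hA : (thQ R (2 * y) - t) / R ≤ 2 / x * exp (-s) := by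
    rw [div_mul_eq_mul_div]
    exact div_le_div₀ (by positivity) (by linarith [thQ_le_one R (2 * y)]) hx hxR
  have hB0 : 0 ≤ t * (1 / s - 1 / R) :=
    mul_nonneg ht0 (sub_nonneg.2 (one_div_le_one_div_of_le hs hsR))
  have hB : t * (1 / s - 1 / R) ≤ (1 + x ^ 2) * (1 + s ^ 2)⁻¹ :=
    calc t * (1 / s - 1 / R) ≤ s * (1 / s - 1 / R) :=
          mul_le_mul_of_nonneg_right hts (sub_nonneg.2 (one_div_le_one_div_of_le hs hsR))
      _ = (R - s) * R / R ^ 2 := by field_simp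
      _ ≤ (R - s) * (R + s) / R ^ 2 := by gcongr; linarith
      _ = x ^ 2 / (x ^ 2 + s ^ 2) := by rw [← hR2]; congr 1; linear_combination hR2
      _ ≤ (1 + x ^ 2) * (1 + s ^ 2)⁻¹ := by
          rw [← div_eq_mul_inv, div_le_div_iff₀ (by positivity) (by positivity)]
          nlinarith [sq_nonneg s, sq_nonneg x]
  rw [hsplit, abs_le]
  constructor <;> linarith

theorem integrableOn_bcsIntegrand {x y : ℝ} (hx : 0 < x) (hy0 : 0 ≤ y) (hy1 : y ≤ 1) :
    IntegrableOn (bcsIntegrand x y) (Ioi 0) := by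
  have hmaj : IntegrableOn (fun s => 2 / x * exp (-s) + (1 + x ^ 2) * (1 + s ^ 2)⁻¹) (Ioi 0) :=
    Integrable.add (by simpa using (exp_neg_integrableOn_Ioi 0 one_pos).const_mul (2 / x))
      (integrable_inv_one_add_sq.integrableOn.const_mul _)
  refine hmaj.mono' (measurable_bcsIntegrand x y).aestronglyMeasurable ?_
  filter_upwards [ae_restrict_mem measurableSet_Ioi] with s hs
  exact abs_bcsIntegrand_le hx hy0 hy1 hs

theorem mul_bcsIntegrand_mul_mul {c : ℝ} (hc : 0 < c) (x y s : ℝ) :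
    c * bcsIntegrand (c * x) (c * y) (c * s)
      = bcsIntegrand x y s - (tanh (c * s / 2) - tanh (s / 2)) / s := by
  have hsqrt : √((c * x) ^ 2 + (c * s) ^ 2) = c * √(x ^ 2 + s ^ 2) := by
    rw [show (c * x) ^ 2 + (c * s) ^ 2 = c ^ 2 * (x ^ 2 + s ^ 2) by ring,
      sqrt_mul (by positivity), sqrt_sq hc.le]
  rw [bcsIntegrand, bcsIntegrand, hsqrt, mul_left_comm 2 c, thQ_mul_mul hc.ne', mul_sub,
    ← mul_div_assoc, ← mul_div_assoc, mul_div_mul_left _ _ hc.ne', mul_div_mul_left _ _ hc.ne']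
  ring

/-- By `mul_bcsIntegrand_mul_mul` with `x = 1`, `y = 0`, the Frullani integrand is a difference
of two integrands of `J(·, 0)`. -/
theorem integrableOn_tanh_frullani {c : ℝ} (hc : 0 < c) :
    IntegrableOn (fun s => (tanh (c * s / 2) - tanh (s / 2)) / s) (Ioi 0) := by
  have hscaled := (integrableOn_Ioi_comp_mul_left_iff (bcsIntegrand c 0) 0 hc).2
    (by simpa using integrableOn_bcsIntegrand hc le_rfl zero_le_one)
  refine ((integrableOn_bcsIntegrand one_pos le_rfl zero_le_one).sub
    (hscaled.const_mul c)).congr_fun (fun s _ => ?_) measurableSet_Ioi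
  have := mul_bcsIntegrand_mul_mul hc 1 0 s
  simp only [mul_one, mul_zero] at this
  simp only [Pi.sub_apply]
  linarith

theorem integral_tanh_frullani {c : ℝ} (hc : 0 < c) :
    ∫ s in Ioi 0, (tanh (c * s / 2) - tanh (s / 2)) / s = log c := by
  have hf : Continuous fun t => tanh (t / 2) := continuous_tanh.comp (continuous_id.div_const 2)
  have h0 : Tendsto (fun t => tanh (t / 2)) (𝓝[>] 0) (𝓝 0) := by
    simpa using hf.continuousWithinAt.tendsto (x := 0) (s := Ioi 0)
  have hinf : Tendsto (fun t => tanh (t / 2)) atTop (𝓝 1) :=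
    tendsto_tanh_atTop.comp (tendsto_id.atTop_div_const two_pos)
  have hform : (fun s : ℝ => s⁻¹ • (tanh (c * s / 2) - tanh (1 * s / 2)))
      = fun s => (tanh (c * s / 2) - tanh (s / 2)) / s := by
    ext s; rw [one_mul, smul_eq_mul, inv_mul_eq_div]
  have := Frullani.integral_Ioi_eq (hf.locallyIntegrable.locallyIntegrableOn _) hc one_pos h0 hinf
    (hform ▸ integrableOn_tanh_frullani hc)
  rw [hform] at this
  rw [this, smul_eq_mul, one_div, log_inv]
  ring

theorem Jfun_mul_mul {x y c : ℝ} (hx : 0 < x) (hy0 : 0 ≤ y) (hy1 : y ≤ 1) (hc : 0 < c) :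
    Jfun (c * x) (c * y) = Jfun x y - log c := by
  have hsub := integral_comp_mul_left_Ioi (bcsIntegrand (c * x) (c * y)) 0 hc
  rw [mul_zero, smul_eq_mul, eq_inv_mul_iff_mul_eq₀ hc.ne', ← integral_const_mul] at hsub
  simp only [mul_bcsIntegrand_mul_mul hc] at hsub
  rw [integral_sub (integrableOn_bcsIntegrand hx hy0 hy1) (integrableOn_tanh_frullani hc),
    integral_tanh_frullani hc] at hsub
  exact hsub.symm

/-- Lemma 6.7: the identity `x = f_BCS(e^{J(x,y)} y) e^{-J(x,y)}` whenever `e^{J(x,y)} y < 1`. -/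
theorem fBCS_J_identity (fBCS : ℝ → ℝ) (hf : IsBCS fBCS) :
    ∀ x : ℝ, 0 < x → ∀ y ∈ Set.Icc (0:ℝ) 1,
      Real.exp (Jfun x y) * y < 1 →
      x = fBCS (Real.exp (Jfun x y) * y) * Real.exp (-(Jfun x y)) := by
  rintro x hx y ⟨hy0, hy1⟩ hlt
  have hc : 0 < exp (Jfun x y) := exp_pos _
  have hzero : Jfun (exp (Jfun x y) * x) (exp (Jfun x y) * y) = 0 := by
    rw [Jfun_mul_mul hx hy0 hy1 hc, log_exp, sub_self]
  have hroot := (hf _ ⟨by positivity, hlt⟩).2.2 _ (by positivity) hzero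
  rw [← hroot, exp_neg, mul_comm, inv_mul_cancel_left₀ hc.ne']
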